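/- Let A = (a_{i,j})_{i,j=0}^{λ−1} be an invertible λ×λ matrix with entries in F_q; in F_{q^m}(X_1,…,X_{λ−1}) set D = a_{0,0} + Σ_{i=1}^{λ−1} a_{i,0} X_i and φ_j = (a_{0,j} + Σ_{i=1}^{λ−1} a_{i,j} X_i)/D for j = 1,…,λ−1. Fix s ∈ {1,…,λ−1} and α_s ∈ F_{q^m}, and set F_s = f^{L_λ}·f^{M_s} − α_s·f^{M_λ}·f^{L_s}. Then F_s(φ_1,…,φ_{λ−1}) = det(A)^2 · D^{−e} · F_s(X_1,…,X_{λ−1}) in F_{q^m}(X_1,…,X_{λ−1}), where e = q^{λ+1} + q^{λ} + 2·Σ_{j=1}^{λ−1} q^{j} + 1 − q^{λ−s}. In particular, if β = (β_1,…,β_{λ−1}) ∈ F_{q^m}^{λ−1} is a common root of the F_s (s = 1,…,λ−1) with D(β) ≠ 0, then (φ_1(β),…,φ_{λ−1}(β)) is again a common root. -/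

import Mathlib

noncomputable section
open MvPolynomial

/-- `f^I = det(Mat^I)` where the `s`-th row of `Mat^I` is
`(1, X_1^{q^{i_s}}, X_2^{q^{i_s}}, …, X_{λ-1}^{q^{i_s}})`, the set
`I = {i_1 < ⋯ < i_λ}` being given by its (strictly increasing) enumeration `ι`. -/
def fI (q lam : ℕ) (F : Type) [CommRing F] (ι : Fin lam → ℕ) : MvPolynomial ℕ F :=
  Matrix.det (Matrix.of fun s t : Fin lam =>
    if (t : ℕ) = 0 then 1 else X (t : ℕ) ^ q ^ ι s)

/-- `f_0 = ∏_{a∈F_q}(X_1+a) · ∏_{i=2}^{λ-1} ∏_{a_0,…,a_{i-1}∈F_q}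
(X_i + ∑_{j=1}^{i-1} a_j X_j + a_0)`, where `F_q = {x | x^q = x}` is the subfield
with `q` elements. -/
def f0 (q lam : ℕ) (F : Type) [Field F] [Fintype F] [DecidableEq F] : MvPolynomial ℕ F :=
  (∏ a ∈ Finset.univ.filter (fun x : F => x ^ q = x), (X 1 + C a)) *
    ∏ i ∈ Finset.Icc 2 (lam - 1),
      ∏ a : Fin i → {x : F // x ^ q = x},
        (X i + ∑ j : Fin i, C (a j).val * if (j : ℕ) = 0 then 1 else X (j : ℕ))

/-- `J_s = {1,…,λ+1} \ {s+1}`. -/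
def Jset (lam s : ℕ) : Set ℕ := Set.Icc 1 (lam + 1) \ {s + 1}

/-- `L_s = {λ+1-t : t ∈ (J_s \ {1}) ∪ {0}}`. -/
def Lset (lam s : ℕ) : Set ℕ := (fun t => lam + 1 - t) '' ((Jset lam s \ {1}) ∪ {0})

/-- `M_s = {λ+1-t : t ∈ J_s}`. -/
def MsetJ (lam s : ℕ) : Set ℕ := (fun t => lam + 1 - t) '' Jset lam s

/-!
Evaluated at a point `x`, `f^I` is the Moore determinant `det (v t ^ q ^ i_s)` of the
homogeneous coordinates `v = (1, x₁, …, x_{λ-1})`. The substitution `X ↦ φ` replaces `v` by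
`v A / D`. Since `v ↦ v ^ q ^ i` is additive and fixes the entries of `A`, the Moore matrix
of `v A` is the Moore matrix of `v` times `A`, so
`f^I(φ) = det A · D^{-∑_{i ∈ I} q^i} · f^I(x)`. Both products in `F_s` have total weight
`∑_{L_λ} q^i + ∑_{M_s} q^i = ∑_{M_λ} q^i + ∑_{L_s} q^i = e`, hence `F_s` is multiplied by
`det(A)² D^{-e}`. Specializing `x` to a point `β` with `D(β) ≠ 0` instead of the generic point
gives the statement about common roots.
-/

open Matrix

section Moore

variable {L : Type*} [CommRing L] {n : ℕ}

def mooreMatrix (q : ℕ) (ι : Fin n → ℕ) (v : Fin n → L) : Matrix (Fin n) (Fin n) L :=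
  of fun s t => v t ^ q ^ ι s

theorem det_mooreMatrix_smul (q : ℕ) (ι : Fin n → ℕ) (c : L) (v : Fin n → L) :
    (mooreMatrix q ι (c • v)).det = c ^ (∑ s, q ^ ι s) * (mooreMatrix q ι v).det := by
  rw [← Finset.prod_pow_eq_pow_sum, ← det_mul_column]
  simp only [mooreMatrix, of_apply, Pi.smul_apply, smul_eq_mul, mul_pow]

theorem mooreMatrix_vecMul {p k q : ℕ} [ExpChar L p] (hq : q = p ^ k) (ι : Fin n → ℕ)
    (v : Fin n → L) {B : Matrix (Fin n) (Fin n) L} (hB : ∀ i j, B i j ^ q = B i j) :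
    mooreMatrix q ι (v ᵥ* B) = mooreMatrix q ι v * B := by
  ext s t
  have hfrob : ∀ a : L, a ^ q = a → a ^ q ^ ι s = a := fun a ha => by
    induction ι s with
    | zero => simp
    | succ m ih => rw [pow_succ, pow_mul, ih, ha]
  simp only [mooreMatrix, of_apply, mul_apply, vecMul, dotProduct]
  have hpow : q ^ ι s = p ^ (k * ι s) := by rw [hq, pow_mul]
  rw [hpow, sum_pow_char_pow]
  refine Finset.sum_congr rfl fun i _ => ?_
  rw [mul_pow, ← hpow, hfrob _ (hB i t)]

end Moore

/-- The affine point `y` in homogeneous coordinates `(1 : y 1 : ⋯ : y (lam - 1))`. -/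
def homogCoords (lam : ℕ) {L : Type*} [One L] (y : ℕ → L) : Fin lam → L :=
  fun t => if (t : ℕ) = 0 then 1 else y t

theorem RingHom.comp_homogCoords {L L' : Type*} [NonAssocSemiring L] [NonAssocSemiring L']
    (h : L →+* L') (lam : ℕ) (y : ℕ → L) :
    h ∘ homogCoords lam y = homogCoords lam (h ∘ y) := by
  ext t
  simp only [Function.comp_apply, homogCoords, apply_ite h, map_one]

theorem smul_homogCoords_eq {L : Type*} [Field L] {lam : ℕ} [NeZero lam] {ψ : ℕ → L}
    {w : Fin lam → L} {d : L} (hd0 : d ≠ 0) (hd : d = w 0) (hψ : ∀ t : Fin lam, ψ t = w t / d) :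
    d • homogCoords lam ψ = w := by
  ext t
  by_cases ht : (t : ℕ) = 0
  · obtain rfl : t = 0 := Fin.ext ht
    simp [homogCoords, hd]
  · simp [homogCoords, ht, hψ, mul_div_cancel₀ _ hd0]

theorem map_sum_C_mul_homogCoords_X {K L : Type*} [CommSemiring K] [CommSemiring L] {lam : ℕ}
    (h : MvPolynomial ℕ K →+* L) (A : Matrix (Fin lam) (Fin lam) K) (t : Fin lam) :
    h (∑ i, C (A i t) * homogCoords lam X i) = (homogCoords lam (h ∘ X) ᵥ* A.map (h.comp C)) t := by
  simp only [map_sum, map_mul, vecMul, dotProduct, ← RingHom.comp_homogCoords, map_apply,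
    Function.comp_apply, RingHom.comp_apply, mul_comm]

theorem smul_homogCoords_of_map {K L : Type*} [CommRing K] [Field L] {lam : ℕ} [NeZero lam]
    (h : MvPolynomial ℕ K →+* L) {A : Matrix (Fin lam) (Fin lam) K} {D : MvPolynomial ℕ K}
    (hD : D = ∑ i, C (A i 0) * homogCoords lam X i) (hD0 : h D ≠ 0) {ψ : ℕ → L}
    (hψ : ∀ t : Fin lam, ψ t = h (∑ i, C (A i t) * homogCoords lam X i) / h D) :
    h D • homogCoords lam ψ = homogCoords lam (h ∘ X) ᵥ* A.map (h.comp C) := by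
  subst hD
  refine smul_homogCoords_eq hD0 (map_sum_C_mul_homogCoords_X h A 0) fun t => ?_
  rw [hψ, map_sum_C_mul_homogCoords_X, map_sum_C_mul_homogCoords_X]

theorem linearIndependent_homogCoords_X (K : Type*) [CommRing K] (lam : ℕ) :
    LinearIndependent K (homogCoords lam (X : ℕ → MvPolynomial ℕ K)) := by
  let expo : Fin lam → ℕ →₀ ℕ := fun t => if (t : ℕ) = 0 then 0 else Finsupp.single t 1
  have hexpo : Function.Injective expo := by
    intro s t hst
    by_cases hs : (s : ℕ) = 0 <;> by_cases ht : (t : ℕ) = 0 <;>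
      simp only [expo, hs, ht, if_true, if_false] at hst
    · exact Fin.ext (hs.trans ht.symm)
    · exact absurd hst.symm (Finsupp.single_ne_zero.mpr one_ne_zero)
    · exact absurd hst (Finsupp.single_ne_zero.mpr one_ne_zero)
    · exact Fin.ext (Finsupp.single_left_injective one_ne_zero hst)
  have h : homogCoords lam (X : ℕ → MvPolynomial ℕ K) = basisMonomials ℕ K ∘ expo := by
    ext1 t
    by_cases ht : (t : ℕ) = 0 <;> simp [homogCoords, expo, ht, coe_basisMonomials, X]
  rw [h]
  exact (basisMonomials ℕ K).linearIndependent.comp expo hexpo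

theorem sum_C_mul_homogCoords_X_ne_zero {K : Type*} [CommRing K] [Nontrivial K] {lam : ℕ}
    {A : Matrix (Fin lam) (Fin lam) K} (hA : IsUnit A.det) (t : Fin lam) :
    ∑ i, C (A i t) * homogCoords lam X i ≠ 0 := by
  intro h0
  have hcol : ∀ i, A i t = 0 :=
    Fintype.linearIndependent_iff.mp (linearIndependent_homogCoords_X K lam) (fun i => A i t)
      (by simpa only [smul_eq_C_mul] using h0)
  exact hA.ne_zero (det_eq_zero_of_column_eq_zero t hcol)

theorem eval₂_comp_C_comp_X {σ R S : Type*} [CommSemiring R] [CommSemiring S]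
    (h : MvPolynomial σ R →+* S) (P : MvPolynomial σ R) : eval₂ (h.comp C) (h ∘ X) P = h P := by
  rw [← eval₂_comp_left, eval₂_eta]

theorem eval₂_fI {K L : Type} [CommRing K] [CommRing L] (g : K →+* L) (y : ℕ → L)
    (q lam : ℕ) (ι : Fin lam → ℕ) :
    eval₂ g y (fI q lam K ι) = (mooreMatrix q ι (homogCoords lam y)).det := by
  rw [fI, ← coe_eval₂Hom, RingHom.map_det]
  congr 1
  ext s t
  simp only [RingHom.mapMatrix_apply, map_apply, of_apply, mooreMatrix, homogCoords,
    apply_ite (eval₂Hom g y), map_one, map_pow, eval₂Hom_X', ite_pow, one_pow]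

section Weights

def EnumeratesLM (lam : ℕ) (ιL ιM : ℕ → Fin lam → ℕ) : Prop :=
  ∀ s ∈ Finset.Icc 1 lam, StrictMono (ιL s) ∧ Set.range (ιL s) = Lset lam s ∧
    StrictMono (ιM s) ∧ Set.range (ιM s) = MsetJ lam s

def FsPoly (q lam : ℕ) (K : Type) [CommRing K] (ιL ιM : ℕ → Fin lam → ℕ) (a : K) (s : ℕ) :
    MvPolynomial ℕ K :=
  fI q lam K (ιL lam) * fI q lam K (ιM s) - C a * (fI q lam K (ιM lam) * fI q lam K (ιL s))

def FsExponent (q lam s : ℕ) : ℕ :=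
  q ^ (lam + 1) + q ^ lam + 2 * (∑ j ∈ Finset.Icc 1 (lam - 1), q ^ j) + 1 - q ^ (lam - s)

theorem Finset.sum_comp_eq_of_range_eq {M : Type*} [AddCommMonoid M] {n : ℕ} {ι : Fin n → ℕ}
    (hι : Function.Injective ι) {S : Finset ℕ} (hS : Set.range ι = S) (f : ℕ → M) :
    ∑ i, f (ι i) = ∑ t ∈ S, f t := by
  have himg : Finset.univ.image ι = S := by
    apply Finset.coe_injective
    rw [Finset.coe_image, Finset.coe_univ, Set.image_univ, hS]
  rw [← himg, Finset.sum_image fun a _ b _ h => hι h]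

variable {q lam s : ℕ}

theorem Lset_eq (hs : s ≤ lam) :
    Lset lam s = ↑((Finset.range lam).erase (lam - s) ∪ {lam + 1}) := by
  ext n
  simp only [Lset, Jset, Set.mem_image, Set.mem_union, Set.mem_sdiff, Set.mem_Icc,
    Set.mem_singleton_iff, Finset.coe_union, Finset.coe_erase, Finset.coe_singleton,
    Finset.coe_range, Set.mem_Iio]
  constructor
  · rintro ⟨t, ⟨⟨⟨h1, h2⟩, h3⟩, h4⟩ | rfl, rfl⟩ <;> omega
  · rintro (⟨hne, hlt⟩ | rfl)
    · exact ⟨lam + 1 - n, Or.inl ⟨⟨⟨by omega, by omega⟩, by omega⟩, by omega⟩, by omega⟩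
    · exact ⟨0, Or.inr rfl, by omega⟩

theorem MsetJ_eq (hs : s ≤ lam) :
    MsetJ lam s = ↑((Finset.range (lam + 1)).erase (lam - s)) := by
  ext n
  simp only [MsetJ, Jset, Set.mem_image, Set.mem_sdiff, Set.mem_Icc, Set.mem_singleton_iff,
    Finset.coe_erase, Finset.coe_range, Set.mem_Iio]
  constructor
  · rintro ⟨t, ⟨⟨h1, h2⟩, h3⟩, rfl⟩
    omega
  · rintro ⟨hne, hlt⟩
    exact ⟨lam + 1 - n, ⟨⟨by omega, by omega⟩, by omega⟩, by omega⟩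

theorem sum_pow_add_pow_of_range_eq_Lset (hs1 : 1 ≤ s) (hs : s ≤ lam) {ι : Fin lam → ℕ}
    (hι : Function.Injective ι) (hr : Set.range ι = Lset lam s) :
    ∑ i, q ^ ι i + q ^ (lam - s) = ∑ u ∈ Finset.range lam, q ^ u + q ^ (lam + 1) := by
  have hdisj : Disjoint ((Finset.range lam).erase (lam - s)) {lam + 1} := by
    simp
  rw [Finset.sum_comp_eq_of_range_eq hι (hr.trans (Lset_eq hs)),
    Finset.sum_union hdisj, Finset.sum_singleton, add_right_comm,
    Finset.sum_erase_add _ _ (by simp; omega)]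

theorem sum_pow_add_pow_of_range_eq_MsetJ (hs : s ≤ lam) {ι : Fin lam → ℕ}
    (hι : Function.Injective ι) (hr : Set.range ι = MsetJ lam s) :
    ∑ i, q ^ ι i + q ^ (lam - s) = ∑ u ∈ Finset.range (lam + 1), q ^ u := by
  rw [Finset.sum_comp_eq_of_range_eq hι (hr.trans (MsetJ_eq hs)),
    Finset.sum_erase_add _ _ (by simp)]

theorem sum_pow_Lset_add_sum_pow_MsetJ_eq {ιL ιM : ℕ → Fin lam → ℕ}
    (hι : EnumeratesLM lam ιL ιM)
    (hs : s ∈ Finset.Icc 1 (lam - 1)) :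
    ∑ i, q ^ ιL lam i + ∑ i, q ^ ιM s i = FsExponent q lam s ∧
      ∑ i, q ^ ιM lam i + ∑ i, q ^ ιL s i = FsExponent q lam s := by
  obtain ⟨hs1, hs⟩ := Finset.mem_Icc.mp hs
  have hlam : 1 ≤ lam := by omega
  obtain ⟨hLl, hLlr, hMl, hMlr⟩ := hι lam (Finset.mem_Icc.mpr ⟨hlam, le_rfl⟩)
  obtain ⟨hLs, hLsr, hMs, hMsr⟩ := hι s (Finset.mem_Icc.mpr ⟨hs1, by omega⟩)
  have wLl := sum_pow_add_pow_of_range_eq_Lset (q := q) hlam le_rfl hLl.injective hLlr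
  have wMl := sum_pow_add_pow_of_range_eq_MsetJ (q := q) le_rfl hMl.injective hMlr
  have wLs := sum_pow_add_pow_of_range_eq_Lset (q := q) hs1 (by omega) hLs.injective hLsr
  have wMs := sum_pow_add_pow_of_range_eq_MsetJ (q := q) (by omega) hMs.injective hMsr
  have hrange : Finset.range lam = insert 0 (Finset.Icc 1 (lam - 1)) := by
    ext n
    simp only [Finset.mem_range, Finset.mem_insert, Finset.mem_Icc]
    omega
  rw [Finset.sum_range_succ, hrange, Finset.sum_insert (by simp)] at wMl wMs
  rw [hrange, Finset.sum_insert (by simp)] at wLl wLs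
  simp only [Nat.sub_self, pow_zero] at wLl wMl wLs wMs
  unfold FsExponent
  omega

end Weights

section Transform

variable {K L : Type} [CommRing K] [CommRing L] {p k q lam : ℕ} [ExpChar L p]
  {A : Matrix (Fin lam) (Fin lam) K} {g : K →+* L} {x ψ : ℕ → L} {d : L}

theorem eval₂_fI_mul_pow (hq : q = p ^ k) (hA : ∀ i j, A i j ^ q = A i j)
    (hψ : d • homogCoords lam ψ = homogCoords lam x ᵥ* A.map g) (ι : Fin lam → ℕ) :
    eval₂ g ψ (fI q lam K ι) * d ^ (∑ s, q ^ ι s) = g A.det * eval₂ g x (fI q lam K ι) := by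
  have hAg : ∀ i j, A.map g i j ^ q = A.map g i j := fun i j => by
    rw [map_apply, ← map_pow, hA]
  rw [eval₂_fI, eval₂_fI, mul_comm, ← det_mooreMatrix_smul, hψ, mooreMatrix_vecMul hq ι _ hAg,
    det_mul, RingHom.map_det, mul_comm]
  rfl

theorem eval₂_fI_mul_fI_mul_pow (hq : q = p ^ k) (hA : ∀ i j, A i j ^ q = A i j)
    (hψ : d • homogCoords lam ψ = homogCoords lam x ᵥ* A.map g) {ι₁ ι₂ : Fin lam → ℕ} {e : ℕ}
    (he : ∑ s, q ^ ι₁ s + ∑ s, q ^ ι₂ s = e) :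
    eval₂ g ψ (fI q lam K ι₁) * eval₂ g ψ (fI q lam K ι₂) * d ^ e =
      g A.det ^ 2 * (eval₂ g x (fI q lam K ι₁) * eval₂ g x (fI q lam K ι₂)) := by
  have h₁ := eval₂_fI_mul_pow hq hA hψ ι₁
  have h₂ := eval₂_fI_mul_pow hq hA hψ ι₂
  rw [← he, pow_add]
  linear_combination (eval₂ g ψ (fI q lam K ι₂) * d ^ ∑ s, q ^ ι₂ s) * h₁ +
    (g A.det * eval₂ g x (fI q lam K ι₁)) * h₂

theorem eval₂_Fs_mul_pow (hq : q = p ^ k) (hA : ∀ i j, A i j ^ q = A i j)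
    (hψ : d • homogCoords lam ψ = homogCoords lam x ᵥ* A.map g) {ιL ιM : ℕ → Fin lam → ℕ}
    (hι : EnumeratesLM lam ιL ιM)
    {s : ℕ} (hs : s ∈ Finset.Icc 1 (lam - 1)) (a : K) :
    eval₂ g ψ (FsPoly q lam K ιL ιM a s) * d ^ FsExponent q lam s =
      g A.det ^ 2 * eval₂ g x (FsPoly q lam K ιL ιM a s) := by
  obtain ⟨he₁, he₂⟩ := sum_pow_Lset_add_sum_pow_MsetJ_eq hι hs
  simp only [FsPoly, eval₂_sub, eval₂_mul, eval₂_C]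
  linear_combination eval₂_fI_mul_fI_mul_pow hq hA hψ he₁ -
    g a * eval₂_fI_mul_fI_mul_pow hq hA hψ he₂

end Transform

theorem map_Fs_mul_pow {K L : Type} [CommRing K] [Field L] {p k q lam : ℕ} [NeZero lam]
    [ExpChar L p] (hq : q = p ^ k) {A : Matrix (Fin lam) (Fin lam) K}
    (hA : ∀ i j, A i j ^ q = A i j) (h : MvPolynomial ℕ K →+* L) {D : MvPolynomial ℕ K}
    (hD : D = ∑ i, C (A i 0) * homogCoords lam X i) (hD0 : h D ≠ 0) {ψ : ℕ → L}
    (hψ : ∀ t : Fin lam, ψ t = h (∑ i, C (A i t) * homogCoords lam X i) / h D)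
    {ιL ιM : ℕ → Fin lam → ℕ}
    (hι : EnumeratesLM lam ιL ιM)
    {s : ℕ} (hs : s ∈ Finset.Icc 1 (lam - 1)) (a : K) :
    eval₂ (h.comp C) ψ (FsPoly q lam K ιL ιM a s) * h D ^ FsExponent q lam s =
      h (C A.det) ^ 2 * h (FsPoly q lam K ιL ιM a s) := by
  have key := eval₂_Fs_mul_pow hq hA (smul_homogCoords_of_map h hD hD0 hψ) hι hs a
  rwa [eval₂_comp_C_comp_X] at key

theorem charP_of_prime_dvd_card {K : Type*} [Field K] [Fintype K] {p : ℕ} (hp : p.Prime)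
    (h : p ∣ Fintype.card K) : CharP K p := by
  have : Fact p.Prime := ⟨hp⟩
  have hchar := CharP.char_is_prime K (ringChar K)
  rw [(Nat.prime_dvd_prime_iff_eq hp hchar).mp ((prime_dvd_char_iff_dvd_card p).mpr h)]
  exact ringChar.charP K

theorem stmt19_general (q m lam : ℕ) (hq : ∃ p e : ℕ, p.Prime ∧ 0 < e ∧ q = p ^ e)
    (hm : 0 < m) [NeZero lam]
    (K : Type) [Field K] [Fintype K] (hcard : Fintype.card K = q ^ m)
    (A : Matrix (Fin lam) (Fin lam) K) (hAq : ∀ i j, A i j ^ q = A i j)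
    (hAinv : IsUnit A.det)
    (ξ : Fin lam → MvPolynomial ℕ K)
    (hξ : ∀ i : Fin lam, ξ i = if (i : ℕ) = 0 then 1 else X (i : ℕ))
    (D : MvPolynomial ℕ K) (hD : D = ∑ i, C (A i 0) * ξ i)
    (φ : ℕ → FractionRing (MvPolynomial ℕ K))
    (hφ : ∀ (j : ℕ) (hj : j < lam), φ j =
      algebraMap (MvPolynomial ℕ K) (FractionRing (MvPolynomial ℕ K))
          (∑ i, C (A i ⟨j, hj⟩) * ξ i) /
        algebraMap (MvPolynomial ℕ K) (FractionRing (MvPolynomial ℕ K)) D)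
    (α : ℕ → K) (ιL ιM : ℕ → Fin lam → ℕ)
    (hι : ∀ s ∈ Finset.Icc 1 lam,
      StrictMono (ιL s) ∧ Set.range (ιL s) = Lset lam s ∧
      StrictMono (ιM s) ∧ Set.range (ιM s) = MsetJ lam s)
    (Fs : ℕ → MvPolynomial ℕ K)
    (hFs : ∀ s, Fs s = fI q lam K (ιL lam) * fI q lam K (ιM s) -
      C (α s) * (fI q lam K (ιM lam) * fI q lam K (ιL s)))
    (e : ℕ → ℕ)
    (he : ∀ s, e s =
      q ^ (lam + 1) + q ^ lam + 2 * (∑ j ∈ Finset.Icc 1 (lam - 1), q ^ j) + 1 -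
        q ^ (lam - s)) :
    (∀ s ∈ Finset.Icc 1 (lam - 1),
      eval₂ ((algebraMap (MvPolynomial ℕ K) (FractionRing (MvPolynomial ℕ K))).comp
          (C : K →+* MvPolynomial ℕ K)) φ (Fs s) =
        (algebraMap (MvPolynomial ℕ K) (FractionRing (MvPolynomial ℕ K)) (C A.det)) ^ 2 *
          algebraMap (MvPolynomial ℕ K) (FractionRing (MvPolynomial ℕ K)) (Fs s) /
          (algebraMap (MvPolynomial ℕ K) (FractionRing (MvPolynomial ℕ K)) D) ^ e s) ∧
    (∀ b : ℕ → K, (∀ s ∈ Finset.Icc 1 (lam - 1), eval b (Fs s) = 0) →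
      eval b D ≠ 0 →
      ∀ s ∈ Finset.Icc 1 (lam - 1),
        eval (fun j => if hj : j < lam then
            (∑ i, A i ⟨j, hj⟩ * if (i : ℕ) = 0 then 1 else b (i : ℕ)) / eval b D
          else 0) (Fs s) = 0) := by
  obtain ⟨p, k, hp, hk, rfl⟩ := hq
  have : Fact p.Prime := ⟨hp⟩
  have : CharP K p := charP_of_prime_dvd_card hp (hcard ▸ dvd_pow (dvd_pow_self p hk.ne') hm.ne')
  obtain rfl : ξ = homogCoords lam X := funext hξ
  refine ⟨fun s hs => ?_, fun b hb hDb s hs => ?_⟩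
  · have hinj := IsFractionRing.injective (MvPolynomial ℕ K) (FractionRing (MvPolynomial ℕ K))
    have : ExpChar (FractionRing (MvPolynomial ℕ K)) p := expChar_of_injective_algebraMap hinj p
    have hD0 := (map_ne_zero_iff _ hinj).mpr (hD ▸ sum_C_mul_homogCoords_X_ne_zero hAinv 0)
    rw [eq_div_iff (pow_ne_zero _ hD0), hFs, he]
    exact map_Fs_mul_pow rfl hAq _ hD hD0 (fun t => hφ t t.isLt) hι hs (α s)
  · set ψ : ℕ → K := fun j => if hj : j < lam then
        (∑ i, A i ⟨j, hj⟩ * if (i : ℕ) = 0 then 1 else b (i : ℕ)) / eval b D else 0 with hψdef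
    have hψ (t : Fin lam) :
        ψ t = eval b (∑ i, C (A i t) * homogCoords lam X i) / eval b D := by
      simp only [hψdef, dif_pos t.isLt, Fin.eta, map_sum, map_mul, eval_C, homogCoords,
        apply_ite (eval b), map_one, eval_X]
    have hC : (eval b).comp C = RingHom.id K := RingHom.ext (eval_C (f := b))
    have key := map_Fs_mul_pow rfl hAq (eval b) hD hDb hψ hι hs (α s)
    rw [← show Fs s = FsPoly _ lam K ιL ιM (α s) s from hFs s, hb s hs, mul_zero, hC] at key
    exact (mul_eq_zero.mp key).resolve_right (pow_ne_zero _ hDb)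

/-- substituting `X_j ↦ φ_j` into `F_s` multiplies it by `det(A)²·D^{-e}`;
in particular the transformation maps common roots of the `F_s` (with `D(β) ≠ 0`) to
common roots. -/
theorem stmt19 (q m lam : ℕ) (hq : ∃ p e : ℕ, p.Prime ∧ 0 < e ∧ q = p ^ e)
    (hm : 0 < m) (hlam : 2 ≤ lam) [NeZero lam]
    (K : Type) [Field K] [Fintype K] [DecidableEq K] (hcard : Fintype.card K = q ^ m)
    (A : Matrix (Fin lam) (Fin lam) K) (hAq : ∀ i j, A i j ^ q = A i j)
    (hAinv : IsUnit A.det)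
    (ξ : Fin lam → MvPolynomial ℕ K)
    (hξ : ∀ i : Fin lam, ξ i = if (i : ℕ) = 0 then 1 else X (i : ℕ))
    (D : MvPolynomial ℕ K) (hD : D = ∑ i, C (A i 0) * ξ i)
    (φ : ℕ → FractionRing (MvPolynomial ℕ K))
    (hφ : ∀ (j : ℕ) (hj : j < lam), φ j =
      algebraMap (MvPolynomial ℕ K) (FractionRing (MvPolynomial ℕ K))
          (∑ i, C (A i ⟨j, hj⟩) * ξ i) /
        algebraMap (MvPolynomial ℕ K) (FractionRing (MvPolynomial ℕ K)) D)
    (α : ℕ → K) (ιL ιM : ℕ → Fin lam → ℕ)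
    (hι : ∀ s ∈ Finset.Icc 1 lam,
      StrictMono (ιL s) ∧ Set.range (ιL s) = Lset lam s ∧
      StrictMono (ιM s) ∧ Set.range (ιM s) = MsetJ lam s)
    (Fs : ℕ → MvPolynomial ℕ K)
    (hFs : ∀ s, Fs s = fI q lam K (ιL lam) * fI q lam K (ιM s) -
      C (α s) * (fI q lam K (ιM lam) * fI q lam K (ιL s)))
    (e : ℕ → ℕ)
    (he : ∀ s, e s =
      q ^ (lam + 1) + q ^ lam + 2 * (∑ j ∈ Finset.Icc 1 (lam - 1), q ^ j) + 1 -
        q ^ (lam - s)) :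
    (∀ s ∈ Finset.Icc 1 (lam - 1),
      eval₂ ((algebraMap (MvPolynomial ℕ K) (FractionRing (MvPolynomial ℕ K))).comp
          (C : K →+* MvPolynomial ℕ K)) φ (Fs s) =
        (algebraMap (MvPolynomial ℕ K) (FractionRing (MvPolynomial ℕ K)) (C A.det)) ^ 2 *
          algebraMap (MvPolynomial ℕ K) (FractionRing (MvPolynomial ℕ K)) (Fs s) /
          (algebraMap (MvPolynomial ℕ K) (FractionRing (MvPolynomial ℕ K)) D) ^ e s) ∧
    (∀ b : ℕ → K, (∀ s ∈ Finset.Icc 1 (lam - 1), eval b (Fs s) = 0) →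
      eval b D ≠ 0 →
      ∀ s ∈ Finset.Icc 1 (lam - 1),
        eval (fun j => if hj : j < lam then
            (∑ i, A i ⟨j, hj⟩ * if (i : ℕ) = 0 then 1 else b (i : ℕ)) / eval b D
          else 0) (Fs s) = 0) :=
  stmt19_general q m lam hq hm K hcard A hAq hAinv ξ hξ D hD φ hφ α ιL ιM hι Fs hFs e he

end
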